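/- If T is a tree with at least three vertices, then T has a color-blind distinguishing 2-edge-coloring; that is, dal(T) ≤ 2. -/

import Mathlib

/-!
Root the tree at a vertex `r` and give the edge between depths `k` and `k + 1` the colour
`⌊(k + 1) / 2⌋ mod 2`. A vertex of even depth `2m` sees only colour `m`, so its colour-blind
partition is `(deg v)`; a vertex of odd depth `2m + 1` sees colour `m` on the edge to its unique
parent and colour `m + 1` on the edges to its children, so its partition is `(1, deg v - 1)`, or
`(1)` for a leaf. Adjacent vertices have depths of different parity, and the two shapes can only
coincide at two adjacent leaves, which a connected graph on at least three vertices does not have.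
-/

open Finset

/-- The color-blind partition of `v`: the multiset of (nonzero) counts of incident
edges of each color, i.e. the partition of `deg v` with trailing zeroes removed. -/
def cbp {V : Type*} [Fintype V] [DecidableEq V] (G : SimpleGraph V) [DecidableRel G.Adj]
    {k : ℕ} (c : Sym2 V → Fin k) (v : V) : Multiset ℕ :=
  (((Finset.univ : Finset (Fin k)).val.map fun i =>
    ((G.neighborFinset v).filter fun w => c s(v, w) = i).card).filter fun m => m ≠ 0)

/-- `c` is a color-blind distinguishing edge-coloring of `G`. -/
def IsCBD {V : Type*} [Fintype V] [DecidableEq V] (G : SimpleGraph V) [DecidableRel G.Adj]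
    {k : ℕ} (c : Sym2 V → Fin k) : Prop :=
  ∀ u v : V, G.Adj u v → cbp G c u ≠ cbp G c v

open Fin.NatCast

namespace SimpleGraph

variable {V : Type*} {G : SimpleGraph V}

lemma Reachable.exists_adj_dist_add_one_eq {r v : V} (hr : G.Reachable r v) (hv : v ≠ r) :
    ∃ w, G.Adj v w ∧ G.dist r w + 1 = G.dist r v := by
  obtain ⟨p, hp⟩ := hr.exists_walk_length_eq_dist
  obtain ⟨w, hadj, q, hq⟩ := p.reverse.exists_eq_cons_of_ne hv
  have hlen : q.length + 1 = G.dist r v := by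
    simpa [hp] using (congrArg Walk.length hq).symm
  have hle : G.dist r w ≤ q.length := dist_comm (G := G) ▸ dist_le q
  have hpos : 0 < G.dist r v := hr.pos_dist_of_ne hv.symm
  refine ⟨w, hadj, ?_⟩
  rcases hadj.diff_dist_adj (u := r) with h | h | h <;> omega

lemma IsAcyclic.eq_of_adj_of_dist_add_one_eq (hG : G.IsAcyclic) {r v w₁ w₂ : V}
    (hr : G.Reachable r v) (h₁ : G.Adj v w₁) (h₂ : G.Adj v w₂)
    (hd₁ : G.dist r w₁ + 1 = G.dist r v) (hd₂ : G.dist r w₂ + 1 = G.dist r v) : w₁ = w₂ := by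
  classical
  obtain ⟨p, hp, -⟩ := hr.exists_path_of_dist
  -- Both `wᵢ` lie on the geodesic `p` from `r` to `v`, as its penultimate vertex.
  have mem_support {w : V} (h : G.Adj v w) (hd : G.dist r w + 1 = G.dist r v) :
      w ∈ p.support := by
    obtain ⟨q, hq, hqlen⟩ := (hr.trans h.reachable).exists_path_of_dist
    refine hG.mem_support_of_ne_mem_support_of_adj_of_isPath hp hq h fun hv => ?_
    have := (dist_le (q.takeUntil v hv)).trans (q.length_takeUntil_le_length hv)
    omega
  rw [hG.eq_penultimate_of_adj_end hp h₁ (mem_support h₁ hd₁),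
    hG.eq_penultimate_of_adj_end hp h₂ (mem_support h₂ hd₂)]

lemma IsTree.even_dist_iff_odd_dist_of_adj (hG : G.IsTree) (r : V) {u v : V} (h : G.Adj u v) :
    Even (G.dist r u) ↔ Odd (G.dist r v) := by
  rcases hG.dist_eq_dist_add_one_of_adj r h with h | h <;> rw [h] <;> simp [parity_simps]

section Finite

variable [Fintype V] [DecidableRel G.Adj]

lemma Connected.degree_ne_one_of_adj_of_degree_eq_one (hG : G.Connected)
    (hV : 3 ≤ Fintype.card V) {u v : V} (h : G.Adj u v) (hu : G.degree u = 1) :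
    G.degree v ≠ 1 := by
  classical
  intro hv
  obtain ⟨r, hr⟩ : ({u, v}ᶜ : Finset V).Nonempty := by
    rw [← card_pos, card_compl]
    have := card_le_two (a := u) (b := v)
    omega
  simp only [mem_compl, mem_insert, mem_singleton, not_or] at hr
  -- Seen from a third vertex `r`, each of `u` and `v` would be the other's parent.
  obtain ⟨u', hu', hdu⟩ := (hG r u).exists_adj_dist_add_one_eq (Ne.symm hr.1)
  obtain ⟨v', hv', hdv⟩ := (hG r v).exists_adj_dist_add_one_eq (Ne.symm hr.2)
  obtain rfl := (degree_eq_one_iff_existsUnique_adj.mp hu).unique hu' h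
  obtain rfl := (degree_eq_one_iff_existsUnique_adj.mp hv).unique hv' h.symm
  omega

def colorDegree {k : ℕ} (G : SimpleGraph V) [DecidableRel G.Adj] (c : Sym2 V → Fin k) (v : V)
    (i : Fin k) : ℕ :=
  #{w ∈ G.neighborFinset v | c s(v, w) = i}

lemma colorDegree_add_colorDegree_one_sub (c : Sym2 V → Fin 2) (v : V) (i : Fin 2) :
    G.colorDegree c v i + G.colorDegree c v (1 - i) = G.degree v := by
  have h (i j : Fin 2) : j = 1 - i ↔ ¬j = i := by revert i j; decide
  simp only [colorDegree, h]
  exact card_filter_add_card_filter_not _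

lemma cbp_fin_two [DecidableEq V] (c : Sym2 V → Fin 2) (v : V) (i : Fin 2) :
    cbp G c v = ({G.colorDegree c v i, G.degree v - G.colorDegree c v i} : Multiset ℕ).filter
      (· ≠ 0) := by
  rw [← colorDegree_add_colorDegree_one_sub c v i, Nat.add_sub_cancel_left]
  fin_cases i
  · rfl
  · exact congrArg _ (Multiset.pair_comm _ _)

end Finite

noncomputable def depthColoring (G : SimpleGraph V) (r : V) (e : Sym2 V) : Fin 2 :=
  ((e.map (G.dist r)).sup / 2 : ℕ)

lemma val_depthColoring_mk (r u v : V) :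
    (G.depthColoring r s(u, v) : ℕ) = max (G.dist r u) (G.dist r v) / 2 % 2 := by
  simp [depthColoring, Fin.val_natCast]

lemma IsTree.depthColoring_eq_of_even (hG : G.IsTree) (r : V) {v w : V} (h : G.Adj v w)
    (hv : Even (G.dist r v)) : G.depthColoring r s(v, w) = (G.dist r v / 2 : ℕ) := by
  obtain ⟨k, hk⟩ := hv
  rw [Fin.ext_iff, val_depthColoring_mk, Fin.val_natCast]
  rcases hG.dist_eq_dist_add_one_of_adj r h with h | h <;> omega

lemma IsTree.depthColoring_eq_iff_of_odd (hG : G.IsTree) (r : V) {v w : V} (h : G.Adj v w)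
    (hv : Odd (G.dist r v)) :
    G.depthColoring r s(v, w) = (G.dist r v / 2 : ℕ) ↔ G.dist r w + 1 = G.dist r v := by
  obtain ⟨k, hk⟩ := hv
  rw [Fin.ext_iff, val_depthColoring_mk, Fin.val_natCast]
  rcases hG.dist_eq_dist_add_one_of_adj r h with h | h <;> omega

variable [Fintype V] [DecidableEq V] [DecidableRel G.Adj]

lemma IsTree.cbp_depthColoring_of_even (hG : G.IsTree) (r : V) {v : V}
    (hv : Even (G.dist r v)) (hdeg : G.degree v ≠ 0) :
    cbp G (G.depthColoring r) v = {G.degree v} := by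
  have hall : G.colorDegree (G.depthColoring r) v (G.dist r v / 2 : ℕ) = G.degree v :=
    congrArg card <| filter_true_of_mem fun w hw =>
      hG.depthColoring_eq_of_even r ((mem_neighborFinset G v w).mp hw) hv
  rw [cbp_fin_two _ v (G.dist r v / 2 : ℕ), hall, Nat.sub_self]
  simp [hdeg, Multiset.filter_singleton]

lemma IsTree.cbp_depthColoring_of_odd (hG : G.IsTree) (r : V) {v : V}
    (hv : Odd (G.dist r v)) :
    cbp G (G.depthColoring r) v = ({1, G.degree v - 1} : Multiset ℕ).filter (· ≠ 0) := by
  have hvr : v ≠ r := by rintro rfl; simp at hv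
  obtain ⟨p, hp, hdp⟩ := (hG.connected r v).exists_adj_dist_add_one_eq hvr
  have hparent : G.colorDegree (G.depthColoring r) v (G.dist r v / 2 : ℕ) = 1 := by
    refine card_eq_one.mpr ⟨p, ext fun w => ?_⟩
    rw [mem_filter, mem_neighborFinset, mem_singleton]
    constructor
    · rintro ⟨hw, hcol⟩
      exact hG.isAcyclic.eq_of_adj_of_dist_add_one_eq (hG.connected r v) hw hp
        ((hG.depthColoring_eq_iff_of_odd r hw hv).mp hcol) hdp
    · rintro rfl
      exact ⟨hp, (hG.depthColoring_eq_iff_of_odd r hp hv).mpr hdp⟩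
  rw [cbp_fin_two _ v (G.dist r v / 2 : ℕ), hparent]

lemma IsTree.cbp_depthColoring_ne_of_adj_of_even (hG : G.IsTree) (hV : 3 ≤ Fintype.card V)
    (r : V) {u v : V} (h : G.Adj u v) (hu : Even (G.dist r u)) :
    cbp G (G.depthColoring r) u ≠ cbp G (G.depthColoring r) v := by
  rw [hG.cbp_depthColoring_of_even r hu h.degree_pos_left.ne',
    hG.cbp_depthColoring_of_odd r ((hG.even_dist_iff_odd_dist_of_adj r h).mp hu)]
  have hleaves := hG.connected.degree_ne_one_of_adj_of_degree_eq_one hV h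
  obtain hv1 | hv2 : G.degree v = 1 ∨ 2 ≤ G.degree v := by have := h.degree_pos_right; omega
  · simpa [hv1] using fun hu1 => hleaves hu1 hv1
  · intro heq
    simpa [Nat.sub_ne_zero_of_lt hv2] using congrArg Multiset.card heq

end SimpleGraph

theorem tree_dal_le_two {V : Type*} [Fintype V] [DecidableEq V]
    (G : SimpleGraph V) [DecidableRel G.Adj]
    (hT : G.IsTree) (h3 : 3 ≤ Fintype.card V) :
    ∃ c : Sym2 V → Fin 2, IsCBD G c := by
  obtain ⟨r⟩ := hT.connected.nonempty
  refine ⟨G.depthColoring r, fun u v h => ?_⟩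
  rcases Nat.even_or_odd (G.dist r u) with hu | hu
  · exact hT.cbp_depthColoring_ne_of_adj_of_even h3 r h hu
  · exact (hT.cbp_depthColoring_ne_of_adj_of_even h3 r h.symm
      ((hT.even_dist_iff_odd_dist_of_adj r h.symm).mpr hu)).symm
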